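/- arXiv:2303.02918 — 2 statements merged into one kernel-verified Lean document; each statement's English description precedes it below -/
import Mathlib

section
/- Let G be a finite simple undirected graph on n vertices with adjacency matrix A, and let r = (r_1, …, r_n) be a random vector whose coordinates are independent Rademacher random variables. Then E[ (A r)ᵀ A (A r) ] / 6 = c3(G), the number of triangles of G; i.e., the TraceTriangle estimator T = ((A r)ᵀ A (A r))/6 is an unbiased estimator of the triangle count. -/
/-!
Since `A` is symmetric, `(A r) ⬝ᵥ A (A r) = r ⬝ᵥ A³ r`. Independent Rademacher coordinates
satisfy `E[rᵢ rⱼ] = δᵢⱼ`, so `E[r ⬝ᵥ M r] = tr M` for every matrix `M` (Hutchinson's trace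
estimator). Finally `tr A³` counts the ordered triples `(i, j, k)` with `i ∼ j ∼ k ∼ i`, and each
triangle arises from exactly `3! = 6` of them.
-/

open Matrix MeasureTheory ProbabilityTheory

/-- The Rademacher distribution on `ℝ`: `+1` with probability `1/2` and `-1`
with probability `1/2`. -/
noncomputable def rademacherMeasure : Measure ℝ :=
  (1 / 2 : ENNReal) • Measure.dirac (1 : ℝ) + (1 / 2 : ENNReal) • Measure.dirac (-1 : ℝ)

open Finset

lemma integral_rademacherMeasure (f : ℝ → ℝ) :
    ∫ x, f x ∂rademacherMeasure = (f 1 + f (-1)) / 2 := by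
  have hint : ∀ a, Integrable f ((1 / 2 : ENNReal) • Measure.dirac a) := fun a =>
    (integrable_dirac enorm_lt_top).smul_measure (by norm_num)
  rw [rademacherMeasure, integral_add_measure (hint 1) (hint (-1)), integral_smul_measure,
    integral_smul_measure, integral_dirac, integral_dirac]
  norm_num
  ring

lemma ae_abs_eq_one_rademacherMeasure : ∀ᵐ x ∂rademacherMeasure, |x| = 1 := by
  simp [rademacherMeasure, ae_add_measure_iff]

section RademacherVariable

variable {Ω : Type*} [MeasurableSpace Ω] {μ : Measure Ω} {X Y : Ω → ℝ}

lemma ae_abs_eq_one_of_map_eq_rademacher (hX : Measurable X)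
    (hmap : μ.map X = rademacherMeasure) : ∀ᵐ ω ∂μ, |X ω| = 1 := by
  have := ae_abs_eq_one_rademacherMeasure
  rwa [← hmap, ae_map_iff hX.aemeasurable (measurableSet_eq_fun (by fun_prop) measurable_const)]
    at this

lemma integral_eq_zero_of_map_eq_rademacher (hX : Measurable X)
    (hmap : μ.map X = rademacherMeasure) : ∫ ω, X ω ∂μ = 0 := by
  calc ∫ ω, X ω ∂μ = ∫ x, x ∂μ.map X :=
        (integral_map hX.aemeasurable aestronglyMeasurable_id).symm
    _ = 0 := by rw [hmap, integral_rademacherMeasure fun x => x]; norm_num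

lemma integral_mul_self_of_map_eq_rademacher [IsProbabilityMeasure μ] (hX : Measurable X)
    (hmap : μ.map X = rademacherMeasure) : ∫ ω, X ω * X ω ∂μ = 1 := by
  have h : (fun ω => X ω * X ω) =ᵐ[μ] fun _ => 1 := by
    filter_upwards [ae_abs_eq_one_of_map_eq_rademacher hX hmap] with ω hω
    rw [← abs_mul_abs_self, hω, one_mul]
  simp [integral_congr_ae h]

lemma integrable_mul_of_map_eq_rademacher [IsFiniteMeasure μ] (hX : Measurable X)
    (hY : Measurable Y) (hmapX : μ.map X = rademacherMeasure)
    (hmapY : μ.map Y = rademacherMeasure) : Integrable (fun ω => X ω * Y ω) μ := by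
  refine .of_bound (hX.mul hY).aestronglyMeasurable 1 ?_
  filter_upwards [ae_abs_eq_one_of_map_eq_rademacher hX hmapX,
    ae_abs_eq_one_of_map_eq_rademacher hY hmapY] with ω hXω hYω
  rw [Real.norm_eq_abs, abs_mul, hXω, hYω, mul_one]

lemma integral_mul_eq_ite_of_iIndepFun_rademacher {ι : Type*} [DecidableEq ι]
    [IsProbabilityMeasure μ] (r : Ω → ι → ℝ) (hmeas : ∀ i, Measurable fun ω => r ω i)
    (hindep : iIndepFun (fun i ω => r ω i) μ)
    (hdist : ∀ i, μ.map (fun ω => r ω i) = rademacherMeasure) (i j : ι) :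
    ∫ ω, r ω i * r ω j ∂μ = if i = j then 1 else 0 := by
  by_cases hij : i = j
  · subst hij
    rw [if_pos rfl, integral_mul_self_of_map_eq_rademacher (hmeas i) (hdist i)]
  · rw [if_neg hij]
    calc ∫ ω, r ω i * r ω j ∂μ = (∫ ω, r ω i ∂μ) * ∫ ω, r ω j ∂μ :=
          (hindep.indepFun hij).integral_mul_eq_mul_integral (hmeas i).aestronglyMeasurable
            (hmeas j).aestronglyMeasurable
      _ = 0 := by rw [integral_eq_zero_of_map_eq_rademacher (hmeas i) (hdist i), zero_mul]

end RademacherVariable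

theorem integral_dotProduct_mulVec_eq_trace {Ω ι : Type*} [MeasurableSpace Ω] {μ : Measure Ω}
    [Fintype ι] [DecidableEq ι] (M : Matrix ι ι ℝ) (r : Ω → ι → ℝ)
    (hint : ∀ i j, Integrable (fun ω => r ω i * r ω j) μ)
    (hmoment : ∀ i j, ∫ ω, r ω i * r ω j ∂μ = if i = j then 1 else 0) :
    ∫ ω, r ω ⬝ᵥ M *ᵥ r ω ∂μ = M.trace := by
  have hexpand : ∀ x : ι → ℝ, x ⬝ᵥ M *ᵥ x = ∑ i, ∑ j, M i j * (x i * x j) := by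
    intro x
    simp only [dotProduct, mulVec, mul_sum]
    exact sum_congr rfl fun i _ => sum_congr rfl fun j _ => by ring
  calc ∫ ω, r ω ⬝ᵥ M *ᵥ r ω ∂μ = ∫ ω, ∑ i, ∑ j, M i j * (r ω i * r ω j) ∂μ := by
        simp only [hexpand]
    _ = ∑ i, ∑ j, M i j * ∫ ω, r ω i * r ω j ∂μ := by
        rw [integral_finsetSum _ fun i _ =>
          integrable_finsetSum _ fun j _ => (hint i j).const_mul (M i j)]
        refine sum_congr rfl fun i _ => ?_
        rw [integral_finsetSum _ fun j _ => (hint i j).const_mul (M i j)]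
        simp only [integral_const_mul]
    _ = M.trace := by simp [hmoment, trace]

namespace SimpleGraph

variable {V : Type*} [Fintype V] [DecidableEq V] (G : SimpleGraph V) [DecidableRel G.Adj]

lemma card_filter_adj_cycle_eq_six {a b c : V} (hab : G.Adj a b) (hac : G.Adj a c)
    (hbc : G.Adj b c) :
    #{p : V × V × V | (G.Adj p.1 p.2.1 ∧ G.Adj p.2.1 p.2.2 ∧ G.Adj p.2.2 p.1) ∧
      {p.1, p.2.1, p.2.2} = ({a, b, c} : Finset V)} = 6 := by
  have hab' := hab.ne
  have hac' := hac.ne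
  have hbc' := hbc.ne
  have hfiber : ({p : V × V × V | (G.Adj p.1 p.2.1 ∧ G.Adj p.2.1 p.2.2 ∧ G.Adj p.2.2 p.1) ∧
      {p.1, p.2.1, p.2.2} = ({a, b, c} : Finset V)} : Finset _) =
      {(a, b, c), (a, c, b), (b, a, c), (b, c, a), (c, a, b), (c, b, a)} := by
    ext ⟨x, y, z⟩
    simp only [mem_filter, mem_univ, true_and, mem_insert,
      mem_singleton, Prod.mk.injEq]
    constructor
    · rintro ⟨⟨hxy, hyz, hzx⟩, hset⟩
      have hmem : ∀ v ∈ ({x, y, z} : Finset V), v = a ∨ v = b ∨ v = c := by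
        simp [hset]
      obtain ⟨hx, hy, hz⟩ : (x = a ∨ x = b ∨ x = c) ∧ (y = a ∨ y = b ∨ y = c) ∧
          (z = a ∨ z = b ∨ z = c) := ⟨hmem x (by simp), hmem y (by simp), hmem z (by simp)⟩
      have := hxy.ne; have := hyz.ne; have := hzx.ne
      rcases hx with rfl | rfl | rfl <;> rcases hy with rfl | rfl | rfl <;>
        rcases hz with rfl | rfl | rfl <;> simp_all
    · rintro (⟨rfl, rfl, rfl⟩ | ⟨rfl, rfl, rfl⟩ | ⟨rfl, rfl, rfl⟩ | ⟨rfl, rfl, rfl⟩ |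
        ⟨rfl, rfl, rfl⟩ | ⟨rfl, rfl, rfl⟩) <;>
        refine ⟨by simp_all [G.adj_comm], ?_⟩ <;> ext <;> simp <;> tauto
  rw [hfiber]
  simp [*, eq_comm]

lemma card_filter_adj_cycle :
    #{p : V × V × V | G.Adj p.1 p.2.1 ∧ G.Adj p.2.1 p.2.2 ∧ G.Adj p.2.2 p.1}
      = 6 * #(G.cliqueFinset 3) := by
  have hmaps : Set.MapsTo (fun p : V × V × V => ({p.1, p.2.1, p.2.2} : Finset V))
      ({p : V × V × V | G.Adj p.1 p.2.1 ∧ G.Adj p.2.1 p.2.2 ∧ G.Adj p.2.2 p.1} : Finset _)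
      (G.cliqueFinset 3) := by
    intro p hp
    simp_all [is3Clique_triple_iff, G.adj_comm]
  rw [card_eq_sum_card_fiberwise hmaps, mul_comm, ← smul_eq_mul, ← sum_const]
  refine sum_congr rfl fun t ht => ?_
  obtain ⟨a, b, c, hab, hac, hbc, rfl⟩ := is3Clique_iff.1 (mem_cliqueFinset_iff.1 ht)
  rw [filter_filter]
  exact G.card_filter_adj_cycle_eq_six hab hac hbc

theorem trace_adjMatrix_pow_three {α : Type*} [Semiring α] :
    (G.adjMatrix α ^ 3).trace = 6 * #(G.cliqueFinset 3) := by
  have hcube : ∀ i j k : V, G.adjMatrix α i j * G.adjMatrix α j k * G.adjMatrix α k i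
      = if G.Adj i j ∧ G.Adj j k ∧ G.Adj k i then 1 else 0 := by
    intro i j k
    by_cases h1 : G.Adj i j <;> by_cases h2 : G.Adj j k <;> by_cases h3 : G.Adj k i <;>
      simp [h1, h2, h3]
  calc (G.adjMatrix α ^ 3).trace
      = ∑ i, ∑ j, ∑ k, G.adjMatrix α i j * G.adjMatrix α j k * G.adjMatrix α k i := by
        simp only [trace, Matrix.diag, pow_three, mul_apply, mul_sum, mul_assoc]
    _ = #{p : V × V × V | G.Adj p.1 p.2.1 ∧ G.Adj p.2.1 p.2.2 ∧ G.Adj p.2.2 p.1} := by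
        simp only [natCast_card_filter, Fintype.sum_prod_type, hcube]
    _ = 6 * #(G.cliqueFinset 3) := by
        rw [card_filter_adj_cycle, Nat.cast_mul, Nat.cast_ofNat]

end SimpleGraph

/-- **The TraceTriangle estimator is an unbiased estimator of the triangle count.**
Let `G` be a finite simple undirected graph with adjacency matrix `A`, and let
`r` be a random vector with independent Rademacher coordinates.  Then
`E[(A r)ᵀ A (A r)] / 6 = c3 G`, the number of triangles of `G`. -/
theorem traceTriangle_unbiased
    {V : Type*} [Fintype V] [DecidableEq V]
    (G : SimpleGraph V) [DecidableRel G.Adj]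
    {Ω : Type*} [MeasurableSpace Ω] (μ : Measure Ω) [IsProbabilityMeasure μ]
    (r : Ω → V → ℝ)
    (hmeas : ∀ i, Measurable fun ω => r ω i)
    (hindep : iIndepFun (fun i ω => r ω i) μ)
    (hdist : ∀ i, μ.map (fun ω => r ω i) = rademacherMeasure) :
    (∫ ω, ((G.adjMatrix ℝ).mulVec (r ω)) ⬝ᵥ
        (G.adjMatrix ℝ).mulVec ((G.adjMatrix ℝ).mulVec (r ω)) ∂μ) / 6
      = ((G.cliqueFinset 3).card : ℝ) := by
  set A := G.adjMatrix ℝ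
  have hquad : ∀ x : V → ℝ, A *ᵥ x ⬝ᵥ A *ᵥ (A *ᵥ x) = x ⬝ᵥ (A ^ 3) *ᵥ x := fun x => by
    rw [pow_three, ← mulVec_mulVec, ← mulVec_mulVec, dotProduct_mulVec x, ← mulVec_transpose,
      G.transpose_adjMatrix]
  have hint : ∀ i j, Integrable (fun ω => r ω i * r ω j) μ := fun i j =>
    integrable_mul_of_map_eq_rademacher (hmeas i) (hmeas j) (hdist i) (hdist j)
  simp only [hquad]
  rw [integral_dotProduct_mulVec_eq_trace _ r hint
      (integral_mul_eq_ite_of_iIndepFun_rademacher r hmeas hindep hdist),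
    G.trace_adjMatrix_pow_three]
  ring
end

section
/- Let S be a real symmetric n×n matrix with a simple dominant eigenvalue: there is an eigenvalue λ_1 ≠ 0 of multiplicity one such that |λ_1| > |λ| for every other eigenvalue λ of S. Let v_1 be a unit eigenvector for λ_1, and let r ∈ ℝ^n satisfy ⟨r, v_1⟩ ≠ 0. Then S^p r ≠ 0 for every p ≥ 0, and there exist signs s_p ∈ {−1, +1} such that s_p · S^p r / ‖S^p r‖ → v_1 as p → ∞; that is, the power-iteration iterates converge to the dominant eigenvector up to sign. -/
/-!
Expand `r` along the eigenspaces of `S`: the component of `r` in the eigenspace of `μ` is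
multiplied by `μ ^ p` under `S ^ p`. After division by `λ₁ ^ p` the components with `μ ≠ λ₁`
decay like `|μ / λ₁| ^ p`, so `λ₁⁻ᵖ • S ^ p r` converges to the orthogonal projection of `r`
onto the eigenspace of `λ₁`, which is `⟪v₁, r⟫ • v₁ ≠ 0` when that eigenspace is `ℝ ∙ v₁`.
Normalising a convergent sequence with nonzero limit gives the normalised limit; the factors
`λ₁ ^ p` and `⟪v₁, r⟫` survive normalisation only through their signs.
-/

open Matrix Filter

/-- The Euclidean norm of a vector in `ℝⁿ` (presented as `Fin n → ℝ`). -/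
noncomputable def euclNorm {n : ℕ} (x : Fin n → ℝ) : ℝ := Real.sqrt (x ⬝ᵥ x)

open Module.End Topology
open scoped RealInnerProductSpace

theorem Module.End.pow_apply_of_mem_eigenspace {R M : Type*} [CommRing R] [AddCommGroup M]
    [Module R M] {f : Module.End R M} {μ : R} {v : M} (hv : v ∈ eigenspace f μ) (p : ℕ) :
    (f ^ p) v = μ ^ p • v := by
  induction p with
  | zero => simp
  | succ p ih =>
    rw [pow_succ', Module.End.mul_apply, ih, map_smul, mem_eigenspace_iff.1 hv, smul_smul,
      pow_succ]

theorem sign_inv_eq_sign {K : Type*} [Field K] [LinearOrder K] [IsStrictOrderedRing K] (t : K) :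
    SignType.sign t⁻¹ = SignType.sign t := by
  rcases lt_trichotomy t 0 with h | rfl | h <;> simp [*]

theorem sign_mul_sign_self_of_ne_zero {α : Type*} [Ring α] [LinearOrder α] [IsStrictOrderedRing α]
    {t : α} (ht : t ≠ 0) : (SignType.sign t : α) * SignType.sign t = 1 := by
  rcases ht.lt_or_gt with h | h <;> simp [h]

theorem inv_norm_smul_smul_eq_sign_smul {E : Type*} [NormedAddCommGroup E] [NormedSpace ℝ E]
    (t : ℝ) (y : E) : ‖t • y‖⁻¹ • t • y = (SignType.sign t : ℝ) • ‖y‖⁻¹ • y := by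
  rcases eq_or_ne t 0 with rfl | ht
  · simp
  have hsign : |t|⁻¹ * t = SignType.sign t := by
    rw [inv_mul_eq_iff_eq_mul₀ (abs_ne_zero.2 ht), mul_comm, sign_mul_abs]
  rw [norm_smul, Real.norm_eq_abs, mul_inv, smul_smul, smul_smul, mul_right_comm, hsign]

namespace LinearMap.IsSymmetric

variable {E : Type*} [NormedAddCommGroup E] [InnerProductSpace ℝ E] {T : Module.End ℝ E} {lam : ℝ}

theorem inner_pow_apply_eq (hT : T.IsSymmetric) {v : E} (hv : T v = lam • v) (x : E) (p : ℕ) :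
    ⟪v, (T ^ p) x⟫ = lam ^ p * ⟪v, x⟫ := by
  rw [← hT.pow p, pow_apply_of_mem_eigenspace (mem_eigenspace_iff.2 hv), real_inner_smul_left]

theorem pow_apply_ne_zero (hT : T.IsSymmetric) {v : E} (hv : T v = lam • v) (hlam : lam ≠ 0)
    {x : E} (hx : ⟪v, x⟫ ≠ 0) (p : ℕ) : (T ^ p) x ≠ 0 := fun h => by
  simpa [h, hlam, hx] using hT.inner_pow_apply_eq hv x p

variable [FiniteDimensional ℝ E]

theorem tendsto_inv_pow_smul_pow_apply_of_mem_eigenspace (hT : T.IsSymmetric) (hlam : lam ≠ 0)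
    (hdom : ∀ μ, HasEigenvalue T μ → μ ≠ lam → |μ| < |lam|) {μ : ℝ} {v : E}
    (hv : v ∈ eigenspace T μ) :
    Tendsto (fun p => (lam ^ p)⁻¹ • (T ^ p) v) atTop
      (𝓝 ((eigenspace T lam).starProjection v)) := by
  simp only [pow_apply_of_mem_eigenspace hv, smul_smul, ← inv_pow, ← mul_pow]
  rcases eq_or_ne μ lam with rfl | hne
  · simp [inv_mul_cancel₀ hlam, Submodule.starProjection_eq_self_iff.2 hv]
  rcases eq_or_ne v 0 with rfl | hv0
  · simp
  have hperp : v ∈ (eigenspace T lam)ᗮ :=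
    Submodule.isOrtho_iff_le.1 (hT.orthogonalFamily_eigenspaces.isOrtho hne) hv
  have hratio : |lam⁻¹ * μ| < 1 := by
    rw [abs_mul, abs_inv, inv_mul_lt_one₀ (abs_pos.2 hlam)]
    exact hdom μ (hasEigenvalue_of_hasEigenvector ⟨hv, hv0⟩) hne
  simpa [(Submodule.starProjection_apply_eq_zero_iff _).2 hperp] using
    (tendsto_pow_atTop_nhds_zero_of_abs_lt_one hratio).smul_const v

theorem tendsto_inv_pow_smul_pow_apply (hT : T.IsSymmetric) (hlam : lam ≠ 0)
    (hdom : ∀ μ, HasEigenvalue T μ → μ ≠ lam → |μ| < |lam|) (x : E) :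
    Tendsto (fun p => (lam ^ p)⁻¹ • (T ^ p) x) atTop
      (𝓝 ((eigenspace T lam).starProjection x)) := by
  have hx : x ∈ ⨆ μ, eigenspace T μ := by
    rw [Submodule.orthogonal_eq_bot_iff.1 hT.orthogonalComplement_iSup_eigenspaces_eq_bot]
    exact Submodule.mem_top
  refine Submodule.iSup_induction (motive := fun x => Tendsto (fun p => (lam ^ p)⁻¹ • (T ^ p) x)
    atTop (𝓝 ((eigenspace T lam).starProjection x))) _ hx
    (fun μ v hv => hT.tendsto_inv_pow_smul_pow_apply_of_mem_eigenspace hlam hdom hv)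
    (by simp) (fun x y hx hy => ?_)
  simpa only [map_add, smul_add] using hx.add hy

theorem tendsto_sign_smul_inv_norm_smul_pow_apply (hT : T.IsSymmetric) (hlam : lam ≠ 0)
    (hdom : ∀ μ, HasEigenvalue T μ → μ ≠ lam → |μ| < |lam|) {v : E}
    (heig : eigenspace T lam = ℝ ∙ v) (hv : ‖v‖ = 1) {x : E} (hx : ⟪v, x⟫ ≠ 0) :
    Tendsto (fun p => (SignType.sign (lam ^ p * ⟪v, x⟫) : ℝ) • ‖(T ^ p) x‖⁻¹ • (T ^ p) x) atTop
      (𝓝 v) := by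
  set c := ⟪v, x⟫
  have hlim : Tendsto (fun p => (lam ^ p)⁻¹ • (T ^ p) x) atTop (𝓝 (c • v)) := by
    simpa [heig, Submodule.starProjection_singleton, hv] using
      hT.tendsto_inv_pow_smul_pow_apply hlam hdom x
  have hnormalized := (hlim.norm.inv₀ (by simp [norm_smul, hv, hx])).smul hlim
  simp only [inv_norm_smul_smul_eq_sign_smul, hv, inv_one, one_smul] at hnormalized
  convert hnormalized.const_smul (SignType.sign c : ℝ) using 1
  · ext p
    rw [sign_inv_eq_sign, sign_mul, SignType.coe_mul, mul_comm, mul_smul]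
  · rw [smul_smul, sign_mul_sign_self_of_ne_zero hx, one_smul]

end LinearMap.IsSymmetric

theorem Matrix.eigenspace_toLpLin {ι R : Type*} [Fintype ι] [DecidableEq ι] [CommRing R]
    (q : ENNReal) (A : Matrix ι ι R) (μ : R) :
    eigenspace (toLpLin q q A) μ =
      (eigenspace A.mulVecLin μ).map ((WithLp.linearEquiv q R (ι → R)).symm : (ι → R) →ₗ[R] _) := by
  ext x
  rw [Submodule.mem_map_equiv, mem_eigenspace_iff, mem_eigenspace_iff, toLpLin_apply,
    ← (WithLp.ofLp_injective q).eq_iff]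
  rfl

theorem Matrix.hasEigenvalue_toLpLin_iff {ι R : Type*} [Fintype ι] [DecidableEq ι] [CommRing R]
    (q : ENNReal) (A : Matrix ι ι R) (μ : R) :
    HasEigenvalue (toLpLin q q A) μ ↔ HasEigenvalue A.mulVecLin μ := by
  rw [hasEigenvalue_iff, hasEigenvalue_iff, eigenspace_toLpLin, Ne, Submodule.map_eq_bot_iff]

theorem euclNorm_eq_norm_toLp {n : ℕ} (x : Fin n → ℝ) : euclNorm x = ‖WithLp.toLp 2 x‖ := by
  simp only [euclNorm, EuclideanSpace.norm_eq, dotProduct, Real.norm_eq_abs, abs_mul_abs_self, sq]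

/-- **Convergence of power iteration for a symmetric matrix with a simple
dominant eigenvalue.**
Let `S` be a real symmetric `n × n` matrix with a simple dominant eigenvalue
`λ₁ ≠ 0` (its eigenspace is one-dimensional and `|λ₁| > |λ|` for every other
eigenvalue `λ`), let `v₁` be a unit eigenvector for `λ₁`, and let `r ∈ ℝⁿ`
satisfy `⟨r, v₁⟩ ≠ 0`.  Then `S^p r ≠ 0` for every `p`, and there are signs
`s p ∈ {−1, +1}` such that `s p • S^p r / ‖S^p r‖ → v₁` as `p → ∞`. -/
theorem power_iteration_converges
    {n : ℕ} (S : Matrix (Fin n) (Fin n) ℝ) (hS : S.IsSymm)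
    (lam1 : ℝ) (hlam1 : lam1 ≠ 0)
    (hsimple : Module.finrank ℝ (Module.End.eigenspace S.mulVecLin lam1) = 1)
    (hdom : ∀ lam : ℝ, Module.End.HasEigenvalue S.mulVecLin lam →
      lam ≠ lam1 → |lam| < |lam1|)
    (v1 : Fin n → ℝ) (hv1 : S.mulVec v1 = lam1 • v1) (hv1unit : euclNorm v1 = 1)
    (r : Fin n → ℝ) (hr : r ⬝ᵥ v1 ≠ 0) :
    (∀ p : ℕ, (S ^ p).mulVec r ≠ 0) ∧
    ∃ s : ℕ → ℝ, (∀ p, s p = 1 ∨ s p = -1) ∧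
      Tendsto (fun p : ℕ =>
          s p • ((euclNorm ((S ^ p).mulVec r))⁻¹ • (S ^ p).mulVec r))
        atTop (nhds v1) := by
  set T := toLpLin 2 2 S
  have hT : T.IsSymmetric := isSymmetric_toEuclideanLin_iff.2 (S.isHermitian_iff_isSymm.2 hS)
  have hTpow (p : ℕ) : (T ^ p) (WithLp.toLp 2 r) = WithLp.toLp 2 ((S ^ p) *ᵥ r) := by
    rw [← toLpLin_pow]; rfl
  have hTv1 : T (WithLp.toLp 2 v1) = lam1 • WithLp.toLp 2 v1 := by
    rw [toLpLin_toLp, toLin'_apply, hv1, WithLp.toLp_smul]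
  have hdomT (μ : ℝ) (hμ : HasEigenvalue T μ) : μ ≠ lam1 → |μ| < |lam1| :=
    hdom μ ((hasEigenvalue_toLpLin_iff 2 S μ).1 hμ)
  have hv1norm : ‖WithLp.toLp 2 v1‖ = 1 := by rwa [← euclNorm_eq_norm_toLp]
  have heig : eigenspace T lam1 = ℝ ∙ WithLp.toLp 2 v1 := by
    refine eq_span_singleton_of_mem_of_finrank_eq_one ?_ (mem_eigenspace_iff.2 hTv1) ?_
    · rw [eigenspace_toLpLin, LinearEquiv.finrank_map_eq, hsimple]
    · rw [← norm_ne_zero_iff, hv1norm]; exact one_ne_zero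
  have hinner : ⟪WithLp.toLp 2 v1, WithLp.toLp 2 r⟫ ≠ 0 := by
    simpa [EuclideanSpace.inner_eq_star_dotProduct] using hr
  refine ⟨fun p h => ?_, fun p => SignType.sign (lam1 ^ p * (r ⬝ᵥ v1)), fun p => ?_, ?_⟩
  · refine hT.pow_apply_ne_zero hTv1 hlam1 hinner p ?_
    rw [hTpow, h, WithLp.toLp_zero]
  · rcases (mul_ne_zero (pow_ne_zero p hlam1) hr).lt_or_gt with h | h <;> simp [h]
  · have := ((PiLp.continuous_ofLp 2 _).tendsto _).comp
      (hT.tendsto_sign_smul_inv_norm_smul_pow_apply hlam1 hdomT heig hv1norm hinner)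
    simpa [Function.comp_def, hTpow, EuclideanSpace.inner_eq_star_dotProduct,
      euclNorm_eq_norm_toLp] using this
end
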